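/- arXiv:1611.05691 — 4 statements merged into one kernel-verified Lean document; each statement's English description precedes it below -/
import Mathlib

section
/- Let θ be an antiunitary operator on ℂ^N with θ² = -1, and let P be an orthogonal projector on ℂ^N satisfying θPθ⁻¹ = P. Then the rank of P is even. -/
/-!
An antilinear `J` with `J² = -1` on a complex space of dimension `n` has, in any basis, a matrix
`A` with `A * conj A = -1`. Taking determinants, `|det A|² = (-1)ⁿ`, which forces `n` to be even.
A time-reversal invariant projector has a `θ`-invariant range, to which this applies.
-/

open Module ComplexConjugate

section AntilinearMatrix

variable {V : Type*} [AddCommGroup V] [Module ℂ V] {ι : Type*} [Fintype ι]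

noncomputable def Module.Basis.antilinearToMatrix (b : Basis ι ℂ V)
    (J : V →ₛₗ[starRingEnd ℂ] V) : Matrix ι ι ℂ :=
  Matrix.of fun i j => b.repr (J (b j)) i

theorem Module.Basis.repr_antilinear_apply (b : Basis ι ℂ V) (J : V →ₛₗ[starRingEnd ℂ] V)
    (v : V) (i : ι) :
    b.repr (J v) i = ∑ j, b.antilinearToMatrix J i j * conj (b.repr v j) := by
  conv_lhs => rw [← b.sum_repr v]
  simp only [map_sum, map_smulₛₗ, Finsupp.coe_finsetSum, Finset.sum_apply, Finsupp.smul_apply,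
    smul_eq_mul, RingHom.id_apply, antilinearToMatrix, Matrix.of_apply, mul_comm]

theorem Module.Basis.antilinearToMatrix_mul_map_conj [DecidableEq ι] (b : Basis ι ℂ V)
    {J : V →ₛₗ[starRingEnd ℂ] V} (hJ : ∀ v, J (J v) = -v) :
    b.antilinearToMatrix J * (b.antilinearToMatrix J).map conj = -1 := by
  ext i k
  have h := b.repr_antilinear_apply J (J (b k)) i
  rw [hJ, map_neg, b.repr_self] at h
  calc _ = (-Finsupp.single k (1 : ℂ)) i := h.symm
    _ = _ := by simp [Matrix.one_apply, Finsupp.single_apply, eq_comm]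

end AntilinearMatrix

theorem Module.finrank_even_of_antilinear_sq_eq_neg_one {V : Type*} [AddCommGroup V]
    [Module ℂ V] [FiniteDimensional ℂ V] {J : V →ₛₗ[starRingEnd ℂ] V}
    (hJ : ∀ v, J (J v) = -v) : Even (finrank ℂ V) := by
  set b := Module.finBasis ℂ V
  set d := (b.antilinearToMatrix J).det
  have hd : (Complex.normSq d : ℂ) = (-1) ^ finrank ℂ V := by
    rw [← Complex.mul_conj, RingHom.map_det, RingHom.mapMatrix_apply, ← Matrix.det_mul,
      b.antilinearToMatrix_mul_map_conj hJ, Matrix.det_neg, Matrix.det_one, mul_one,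
      Fintype.card_fin]
  refine (Nat.even_or_odd _).resolve_right fun hodd => ?_
  rw [hodd.neg_one_pow] at hd
  have hneg : Complex.normSq d = -1 := by exact_mod_cast hd
  linarith [Complex.normSq_nonneg d]

theorem Submodule.finrank_even_of_antilinear_sq_eq_neg_one {V : Type*} [AddCommGroup V]
    [Module ℂ V] {p : Submodule ℂ V} [FiniteDimensional ℂ p] {J : V →ₛₗ[starRingEnd ℂ] V}
    (hJ : ∀ v, J (J v) = -v) (hp : ∀ v ∈ p, J v ∈ p) : Even (finrank ℂ p) :=
  Module.finrank_even_of_antilinear_sq_eq_neg_one (J := J.restrict hp) fun v =>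
    Subtype.ext (hJ v)

theorem rank_even_of_time_reversal_invariant_projector_general
    (N : ℕ)
    (θ : EuclideanSpace ℂ (Fin N) ≃ₛₗ[starRingEnd ℂ] EuclideanSpace ℂ (Fin N))
    (hθ2 : ∀ φ : EuclideanSpace ℂ (Fin N), θ (θ φ) = -φ)
    (P : EuclideanSpace ℂ (Fin N) →ₗ[ℂ] EuclideanSpace ℂ (Fin N))
    (hTRS : ∀ φ : EuclideanSpace ℂ (Fin N), θ (P φ) = P (θ φ)) :
    Even (Module.finrank ℂ (LinearMap.range P)) := by
  refine Submodule.finrank_even_of_antilinear_sq_eq_neg_one (J := θ.toLinearMap) hθ2 ?_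
  rintro _ ⟨φ, rfl⟩
  exact ⟨θ φ, (hTRS φ).symm⟩

/-- Let `θ` be an antiunitary operator on `ℂ^N` with `θ² = -1`, and let
`P` be an orthogonal projector on `ℂ^N` commuting with `θ` (i.e. `θ P θ⁻¹ = P`).
Then the rank of `P` is even. -/
theorem rank_even_of_time_reversal_invariant_projector
    (N : ℕ)
    (θ : EuclideanSpace ℂ (Fin N) ≃ₛₗ[starRingEnd ℂ] EuclideanSpace ℂ (Fin N))
    (hθ : ∀ φ ψ : EuclideanSpace ℂ (Fin N), (inner ℂ (θ φ) (θ ψ) : ℂ) = inner ℂ ψ φ)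
    (hθ2 : ∀ φ : EuclideanSpace ℂ (Fin N), θ (θ φ) = -φ)
    (P : EuclideanSpace ℂ (Fin N) →ₗ[ℂ] EuclideanSpace ℂ (Fin N))
    (hproj : P ∘ₗ P = P)
    (hsa : ∀ φ ψ : EuclideanSpace ℂ (Fin N), (inner ℂ (P φ) ψ : ℂ) = inner ℂ φ (P ψ))
    (hTRS : ∀ φ : EuclideanSpace ℂ (Fin N), θ (P φ) = P (θ φ)) :
    Even (Module.finrank ℂ (LinearMap.range P)) :=
  rank_even_of_time_reversal_invariant_projector_general N θ hθ2 P hTRS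
end

section
/- Let k ↦ P(k) be a differentiable family of orthogonal projectors on ℂ^N and set Ũ(t,k) := exp(iπt P(k)). Then Ũ⁻¹ dŨ = iπ P dt + (e^{iπt} - 1) dP + 2(1 - cos(πt)) P dP, where dP denotes the differential of P in the k-variables. -/
open Matrix Complex

attribute [local instance] Matrix.linftyOpNormedAddCommGroup Matrix.linftyOpNormedSpace
  Matrix.linftyOpNormedRing Matrix.linftyOpNormedAlgebra

set_option maxHeartbeats 1000000 in
lemma exp_smul_idem {N : ℕ} (c : ℂ) (p : Matrix (Fin N) (Fin N) ℂ) (hp : p * p = p) :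
    NormedSpace.exp (c • p) = 1 + (Complex.exp c - 1) • p := by
  have hpn : ∀ n : ℕ, p ^ (n + 1) = p := by
    intro n; induction n with
    | zero => simp
    | succ n ih => rw [pow_succ, ih, hp]
  have hsM : Summable (fun n : ℕ => ((n.factorial : ℂ))⁻¹ • (c • p) ^ n) :=
    NormedSpace.expSeries_summable' _
  have hsC : Summable (fun n : ℕ => ((n.factorial : ℂ))⁻¹ • c ^ n) :=
    NormedSpace.expSeries_summable' (𝔸 := ℂ) c
  have hexpC : Complex.exp c = ∑' n : ℕ, ((n.factorial : ℂ))⁻¹ • c ^ n := by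
    rw [Complex.exp_eq_exp_ℂ, NormedSpace.exp_eq_tsum ℂ]
  rw [NormedSpace.exp_eq_tsum ℂ]
  show (∑' n : ℕ, ((n.factorial : ℂ))⁻¹ • (c • p) ^ n) = 1 + (Complex.exp c - 1) • p
  rw [Summable.tsum_eq_zero_add hsM]
  have h0 : (((Nat.factorial 0) : ℂ))⁻¹ • (c • p) ^ 0 = 1 := by simp
  have h1 : (fun n : ℕ => (((n+1).factorial : ℂ))⁻¹ • (c • p) ^ (n+1))
      = fun n : ℕ => ((((n+1).factorial : ℂ))⁻¹ • c ^ (n+1)) • p := by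
    funext n
    rw [smul_pow, hpn]
    exact (smul_assoc _ _ _).symm
  rw [h0, h1]
  have hsC' : Summable (fun n : ℕ => (((n+1).factorial : ℂ))⁻¹ • c ^ (n+1)) :=
    (summable_nat_add_iff 1).2 hsC
  rw [Summable.tsum_smul_const hsC']
  congr 1
  have h2 : (∑' n : ℕ, (((n+1).factorial : ℂ))⁻¹ • c ^ (n+1)) = Complex.exp c - 1 := by
    have := Summable.tsum_eq_zero_add hsC
    rw [← hexpC] at this
    simp only [Nat.factorial_zero, Nat.cast_one, inv_one, pow_zero, one_smul] at this
    linear_combination -this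
  rw [h2, sub_smul, one_smul]

/-- For a differentiable family `k ↦ P(k)` of orthogonal projectors on
`ℂ^N` and `Ũ(t,k) := exp(iπt P(k))`, the matrix-valued 1-form `Ũ⁻¹ dŨ` equals
`iπ P dt + (e^{iπt} - 1) dP + 2(1 - cos(πt)) P dP`, stated componentwise in the
coordinates `(t, k₁, k₂)`. -/
theorem unitary_extension_maurer_cartan_form
    (N : ℕ) (P : ℝ → ℝ → Matrix (Fin N) (Fin N) ℂ)
    (hsmooth : ∀ i j, ContDiff ℝ (⊤ : ℕ∞) fun k : ℝ × ℝ => P k.1 k.2 i j)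
    (hproj : ∀ k₁ k₂, P k₁ k₂ * P k₁ k₂ = P k₁ k₂)
    (hherm : ∀ k₁ k₂, (P k₁ k₂)ᴴ = P k₁ k₂)
    (U : ℝ → ℝ → ℝ → Matrix (Fin N) (Fin N) ℂ)
    (hU : ∀ t k₁ k₂, U t k₁ k₂ = NormedSpace.exp ((Real.pi * I * t) • P k₁ k₂))
    (DtU D1U D2U : ℝ → ℝ → ℝ → Matrix (Fin N) (Fin N) ℂ)
    (hDtU : ∀ t k₁ k₂ i j, DtU t k₁ k₂ i j = deriv (fun s => U s k₁ k₂ i j) t)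
    (hD1U : ∀ t k₁ k₂ i j, D1U t k₁ k₂ i j = deriv (fun s => U t s k₂ i j) k₁)
    (hD2U : ∀ t k₁ k₂ i j, D2U t k₁ k₂ i j = deriv (fun s => U t k₁ s i j) k₂)
    (D1P D2P : ℝ → ℝ → Matrix (Fin N) (Fin N) ℂ)
    (hD1P : ∀ k₁ k₂ i j, D1P k₁ k₂ i j = deriv (fun s => P s k₂ i j) k₁)
    (hD2P : ∀ k₁ k₂ i j, D2P k₁ k₂ i j = deriv (fun s => P k₁ s i j) k₂) :
    ∀ t k₁ k₂,
      (U t k₁ k₂)⁻¹ * DtU t k₁ k₂ = (Real.pi * I) • P k₁ k₂ ∧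
      (U t k₁ k₂)⁻¹ * D1U t k₁ k₂
        = (Complex.exp (Real.pi * I * t) - 1) • D1P k₁ k₂
          + ((2 * (1 - Real.cos (Real.pi * t)) : ℝ) : ℂ) • (P k₁ k₂ * D1P k₁ k₂) ∧
      (U t k₁ k₂)⁻¹ * D2U t k₁ k₂
        = (Complex.exp (Real.pi * I * t) - 1) • D2P k₁ k₂
          + ((2 * (1 - Real.cos (Real.pi * t)) : ℝ) : ℂ) • (P k₁ k₂ * D2P k₁ k₂) := by
  intro t k₁ k₂
  set z : ℝ → ℂ := fun s => Complex.exp (Real.pi * I * s) with hzdef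
  set w : ℂ := Complex.exp (-(Real.pi * I * t)) with hwdef
  have hUeq : ∀ s a b, U s a b = 1 + (z s - 1) • P a b := by
    intro s a b
    rw [hU, exp_smul_idem _ _ (hproj a b)]
  have hzw : z t * w = 1 := by
    rw [hzdef, hwdef, ← Complex.exp_add]
    simp
  -- multiplication rule for 1 + a • P
  have key : ∀ a b : ℂ, (1 + a • P k₁ k₂) * (1 + b • P k₁ k₂)
      = 1 + (a + b + a * b) • P k₁ k₂ := by
    intro a b
    have h : (a • P k₁ k₂) * (b • P k₁ k₂) = (a * b) • P k₁ k₂ := by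
      rw [Matrix.smul_mul, Matrix.mul_smul, hproj, smul_smul]
    rw [mul_add, add_mul, add_mul, mul_one, one_mul, h, add_smul, add_smul]
    simp only [mul_one]
    abel
  set V : Matrix (Fin N) (Fin N) ℂ := 1 + (w - 1) • P k₁ k₂ with hVdef
  have hVU : V * U t k₁ k₂ = 1 := by
    rw [hVdef, hUeq, key]
    have : (w - 1) + (z t - 1) + (w - 1) * (z t - 1) = 0 := by
      linear_combination hzw
    rw [this, zero_smul, add_zero]
  have hinv : (U t k₁ k₂)⁻¹ = V := Matrix.inv_eq_left_inv hVU
  -- V * P = w • P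
  have hVP : V * P k₁ k₂ = w • P k₁ k₂ := by
    have h : (1 : ℂ) • P k₁ k₂ + (w - 1) • P k₁ k₂ = w • P k₁ k₂ := by
      rw [← add_smul]; congr 1; ring
    rw [hVdef, add_mul, one_mul, Matrix.smul_mul, hproj, ← h, one_smul]
  -- scalar identity
  have h1 : z t = Complex.cos (Real.pi * t) + Complex.sin (Real.pi * t) * I := by
    simp only [hzdef]
    rw [show ((Real.pi : ℂ) * I * (t : ℂ)) = ((Real.pi * t : ℝ) : ℂ) * I by push_cast; ring,
      Complex.exp_mul_I]
    push_cast
    ring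
  have h2 : w = Complex.cos (Real.pi * t) - Complex.sin (Real.pi * t) * I := by
    rw [hwdef, show (-((Real.pi : ℂ) * I * (t : ℂ))) = ((-(Real.pi * t) : ℝ) : ℂ) * I by
      push_cast; ring, Complex.exp_mul_I]
    push_cast
    rw [Complex.cos_neg, Complex.sin_neg]
    ring
  have hc : (z t - 1) * (w - 1) = ((2 * (1 - Real.cos (Real.pi * t)) : ℝ) : ℂ) := by
    have hsum : z t + w = 2 * Complex.cos ((Real.pi : ℂ) * t) := by
      rw [h1, h2]; ring
    push_cast [Complex.ofReal_cos]
    linear_combination hzw - hsum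
  -- time derivative of U
  have hz' : ∀ s : ℝ, HasDerivAt z ((Real.pi : ℂ) * I * z s) s := by
    intro s
    have h : HasDerivAt (fun u : ℂ => Complex.exp ((Real.pi : ℂ) * I * u))
        (Complex.exp ((Real.pi : ℂ) * I * s) * ((Real.pi : ℂ) * I)) (s : ℂ) := by
      simpa using ((hasDerivAt_id (s : ℂ)).const_mul ((Real.pi : ℂ) * I)).cexp
    have := h.comp_ofReal
    simpa [hzdef, mul_comm] using this
  have hDtUeq : DtU t k₁ k₂ = ((Real.pi : ℂ) * I * z t) • P k₁ k₂ := by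
    ext i j
    rw [hDtU]
    have hf : (fun s => U s k₁ k₂ i j)
        = fun s => (1 : Matrix (Fin N) (Fin N) ℂ) i j + (z s - 1) * P k₁ k₂ i j := by
      funext s; rw [hUeq]; simp [Matrix.add_apply]
    rw [hf]
    have : HasDerivAt (fun s => (1 : Matrix (Fin N) (Fin N) ℂ) i j + (z s - 1) * P k₁ k₂ i j)
        ((Real.pi : ℂ) * I * z t * P k₁ k₂ i j) t :=
      (((hz' t).sub_const 1).mul_const _).const_add _
    rw [this.deriv]
    simp [Matrix.smul_apply]
  -- k derivatives of U : generic helper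
  have hVmul : ∀ M : Matrix (Fin N) (Fin N) ℂ,
      V * ((z t - 1) • M) = (z t - 1) • M
        + ((2 * (1 - Real.cos (Real.pi * t)) : ℝ) : ℂ) • (P k₁ k₂ * M) := by
    intro M
    rw [Matrix.mul_smul, hVdef, add_mul, one_mul, Matrix.smul_mul, smul_add, smul_smul, hc]
  refine ⟨?_, ?_, ?_⟩
  · rw [hinv, hDtUeq, Matrix.mul_smul, hVP, smul_smul]
    rw [show (Real.pi : ℂ) * I * z t * w = (Real.pi : ℂ) * I by
      rw [mul_assoc]; rw [hzw]; ring]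
  · have hdiff : ∀ i j, DifferentiableAt ℝ (fun s => P s k₂ i j) k₁ := by
      intro i j
      exact (((hsmooth i j).differentiable (by simp)).comp
        (differentiable_id.prodMk (differentiable_const k₂))).differentiableAt
    have hD1Ueq : D1U t k₁ k₂ = (z t - 1) • D1P k₁ k₂ := by
      ext i j
      rw [hD1U]
      have hf : (fun s => U t s k₂ i j)
          = fun s => (1 : Matrix (Fin N) (Fin N) ℂ) i j + (z t - 1) * P s k₂ i j := by
        funext s; rw [hUeq]; simp [Matrix.add_apply]
      rw [hf, deriv_const_add, deriv_const_mul _ (hdiff i j)]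
      rw [Matrix.smul_apply, hD1P]
      simp [smul_eq_mul]
    rw [hinv, hD1Ueq, hVmul]
  · have hdiff : ∀ i j, DifferentiableAt ℝ (fun s => P k₁ s i j) k₂ := by
      intro i j
      exact (((hsmooth i j).differentiable (by simp)).comp
        ((differentiable_const k₁).prodMk differentiable_id)).differentiableAt
    have hD2Ueq : D2U t k₁ k₂ = (z t - 1) • D2P k₁ k₂ := by
      ext i j
      rw [hD2U]
      have hf : (fun s => U t k₁ s i j)
          = fun s => (1 : Matrix (Fin N) (Fin N) ℂ) i j + (z t - 1) * P k₁ s i j := by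
        funext s; rw [hUeq]; simp [Matrix.add_apply]
      rw [hf, deriv_const_add, deriv_const_mul _ (hdiff i j)]
      rw [Matrix.smul_apply, hD2P]
      simp [smul_eq_mul]
    rw [hinv, hD2Ueq, hVmul]
end

section
/- Let k ↦ P(k) be a smooth, 2πℤ²-periodic family of orthogonal projectors on ℂ^N and set U_P(k) := 1 - 2P(k). Then (1/12π)∫_{[0,1]×𝕋²} Tr{(Ũ⁻¹dŨ)³} = π·C₁(P) where Ũ(t,k) := exp(iπt P(k)) and C₁(P) = (1/2π)∫_{𝕋²}(-i)Tr{P(dP)²} is the Chern number. In particular e^{i S_WZ[U_P]} = (-1)^{C₁(P)}. -/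
open Matrix Complex

set_option maxHeartbeats 1000000

noncomputable def projHom {N : ℕ} (P : Matrix (Fin N) (Fin N) ℂ) (hP : P * P = P) :
    (ℂ × ℂ) →+* Matrix (Fin N) (Fin N) ℂ where
  toFun x := x.1 • ((1 : Matrix (Fin N) (Fin N) ℂ) - P) + x.2 • P
  map_one' := by simp
  map_mul' x y := by
    have h1 : ((1 : Matrix (Fin N) (Fin N) ℂ) - P) * P = 0 := by
      simp [Matrix.sub_mul, hP]
    have h2 : P * ((1 : Matrix (Fin N) (Fin N) ℂ) - P) = 0 := by
      simp [Matrix.mul_sub, hP]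
    have h3 : ((1 : Matrix (Fin N) (Fin N) ℂ) - P) * ((1 : Matrix (Fin N) (Fin N) ℂ) - P)
        = (1 : Matrix (Fin N) (Fin N) ℂ) - P := by
      simp [Matrix.sub_mul, Matrix.mul_sub, hP]
    simp only [Prod.fst_mul, Prod.snd_mul, Matrix.add_mul, Matrix.mul_add,
      Matrix.smul_mul, Matrix.mul_smul, h1, h2, h3, hP, smul_zero, add_zero, zero_add,
      smul_smul]
    ring_nf
  map_zero' := by simp
  map_add' x y := by
    simp only [Prod.fst_add, Prod.snd_add, add_smul]
    abel

lemma exp_smul_proj {N : ℕ} (P : Matrix (Fin N) (Fin N) ℂ) (hP : P * P = P) (c : ℂ) :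
    NormedSpace.exp (c • P) = 1 + (Complex.exp c - 1) • P := by
  letI : SeminormedRing (Matrix (Fin N) (Fin N) ℂ) := Matrix.linftyOpSemiNormedRing
  letI : NormedRing (Matrix (Fin N) (Fin N) ℂ) := Matrix.linftyOpNormedRing
  letI : NormedAlgebra ℂ (Matrix (Fin N) (Fin N) ℂ) := Matrix.linftyOpNormedAlgebra
  have hc : c • P = projHom P hP (0, c) := by
    simp [projHom]
  rw [hc]
  erw [← NormedSpace.map_exp (projHom P hP) (by
    refine Continuous.add ?_ ?_
    · exact (continuous_fst.smul continuous_const)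
    · exact (continuous_snd.smul continuous_const))]
  have h2 : NormedSpace.exp ((0, c) : ℂ × ℂ) = (1, Complex.exp c) := by
    ext
    · rw [Prod.fst_exp]; simp [NormedSpace.exp_zero]
    · rw [Prod.snd_exp]; simp [Complex.exp_eq_exp_ℂ]
  rw [h2]
  show (1 : ℂ) • ((1 : Matrix (Fin N) (Fin N) ℂ) - P) + Complex.exp c • P = _
  rw [one_smul, sub_smul, one_smul]
  abel

lemma perm3_sum {N : ℕ} (f : Fin 3 → Matrix (Fin N) (Fin N) ℂ) :
    (∑ σ : Equiv.Perm (Fin 3), ((Equiv.Perm.sign σ : ℤ) : ℂ) *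
      Matrix.trace (f (σ 0) * f (σ 1) * f (σ 2)))
    = 3 * (Matrix.trace (f 0 * (f 1 * f 2)) - Matrix.trace (f 0 * (f 2 * f 1))) := by
  have huniv : (Finset.univ : Finset (Equiv.Perm (Fin 3))) =
      {1, Equiv.swap 0 1, Equiv.swap 0 2, Equiv.swap 1 2,
       Equiv.swap 0 1 * Equiv.swap 1 2, Equiv.swap 0 2 * Equiv.swap 1 2} := by decide
  rw [huniv]
  rw [show ({1, Equiv.swap 0 1, Equiv.swap 0 2, Equiv.swap 1 2,
       Equiv.swap 0 1 * Equiv.swap 1 2, Equiv.swap 0 2 * Equiv.swap 1 2} :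
       Finset (Equiv.Perm (Fin 3))) = insert 1 (insert (Equiv.swap 0 1) (insert (Equiv.swap 0 2)
         (insert (Equiv.swap 1 2) (insert (Equiv.swap 0 1 * Equiv.swap 1 2)
           {Equiv.swap 0 2 * Equiv.swap 1 2})))) from rfl]
  rw [Finset.sum_insert (by decide), Finset.sum_insert (by decide),
    Finset.sum_insert (by decide), Finset.sum_insert (by decide),
    Finset.sum_insert (by decide), Finset.sum_singleton]
  have s0 : Equiv.Perm.sign (1 : Equiv.Perm (Fin 3)) = 1 := by decide
  have s1 : Equiv.Perm.sign (Equiv.swap (0:Fin 3) 1) = -1 := by decide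
  have s2 : Equiv.Perm.sign (Equiv.swap (0:Fin 3) 2) = -1 := by decide
  have s3 : Equiv.Perm.sign (Equiv.swap (1:Fin 3) 2) = -1 := by decide
  have s4 : Equiv.Perm.sign (Equiv.swap (0:Fin 3) 1 * Equiv.swap 1 2) = 1 := by decide
  have s5 : Equiv.Perm.sign (Equiv.swap (0:Fin 3) 2 * Equiv.swap 1 2) = 1 := by decide
  rw [s0, s1, s2, s3, s4, s5]
  have a1 : ∀ x : Fin 3, Equiv.swap (0:Fin 3) 1 x = ![1,0,2] x := by decide
  have a2 : ∀ x : Fin 3, Equiv.swap (0:Fin 3) 2 x = ![2,1,0] x := by decide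
  have a3 : ∀ x : Fin 3, Equiv.swap (1:Fin 3) 2 x = ![0,2,1] x := by decide
  have a4 : ∀ x : Fin 3, ((Equiv.swap (0:Fin 3) 1 * Equiv.swap 1 2 : Equiv.Perm (Fin 3))) x = ![1,2,0] x := by decide
  have a5 : ∀ x : Fin 3, ((Equiv.swap (0:Fin 3) 2 * Equiv.swap 1 2 : Equiv.Perm (Fin 3))) x = ![2,0,1] x := by decide
  simp only [a1, a2, a3, a4, a5, Equiv.Perm.one_apply]
  norm_num [Matrix.cons_val_zero, Matrix.cons_val_one]
  rw [show (![1,0,2] : Fin 3 → Fin 3) 2 = 2 from rfl, show (![2,1,0] : Fin 3 → Fin 3) 2 = 0 from rfl,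
    show (![0,2,1] : Fin 3 → Fin 3) 2 = 1 from rfl, show (![1,2,0] : Fin 3 → Fin 3) 2 = 0 from rfl,
    show (![2,0,1] : Fin 3 → Fin 3) 2 = 1 from rfl]
  have cyc : ∀ X Y Z : Matrix (Fin N) (Fin N) ℂ, Matrix.trace (X * Y * Z) = Matrix.trace (Z * (X * Y)) :=
    fun X Y Z => Matrix.trace_mul_comm (X * Y) Z
  have h1 : Matrix.trace (f 1 * f 0 * f 2) = Matrix.trace (f 0 * (f 2 * f 1)) := by
    rw [cyc, ← mul_assoc, cyc]
  have h2 : Matrix.trace (f 2 * f 1 * f 0) = Matrix.trace (f 0 * (f 2 * f 1)) := by rw [cyc]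
  have h3 : Matrix.trace (f 1 * f 2 * f 0) = Matrix.trace (f 0 * (f 1 * f 2)) := by rw [cyc]
  have h4 : Matrix.trace (f 2 * f 0 * f 1) = Matrix.trace (f 0 * (f 1 * f 2)) := by
    rw [cyc, ← mul_assoc, cyc]
  rw [h1, h2, h3, h4, mul_assoc (f 0) (f 1) (f 2), mul_assoc (f 0) (f 2) (f 1)]
  ring

lemma key_trace {N : ℕ} (Pm Q₁ Q₂ : Matrix (Fin N) (Fin N) ℂ) (hP : Pm * Pm = Pm)
    (h1 : Pm * Q₁ * Pm = 0) (h2 : Pm * Q₂ * Pm = 0) (a u w : ℂ) :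
    Matrix.trace ((a • Pm) * ((u • Q₁ + w • (Pm * Q₁)) * (u • Q₂ + w • (Pm * Q₂)))) -
      Matrix.trace ((a • Pm) * ((u • Q₂ + w • (Pm * Q₂)) * (u • Q₁ + w • (Pm * Q₁))))
    = (a * (u^2 + w*u)) * Matrix.trace (Pm * (Q₁ * Q₂ - Q₂ * Q₁)) := by
  have f1 : Pm * (Q₁ * (Pm * Q₂)) = 0 := by
    rw [← mul_assoc, ← mul_assoc, h1, Matrix.zero_mul]
  have f2 : Pm * (Q₂ * (Pm * Q₁)) = 0 := by
    rw [← mul_assoc, ← mul_assoc, h2, Matrix.zero_mul]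
  have f3 : Pm * (Pm * Q₁ * Q₂) = Pm * (Q₁ * Q₂) := by
    rw [← mul_assoc, ← mul_assoc, hP, mul_assoc]
  have f3' : Pm * (Pm * Q₂ * Q₁) = Pm * (Q₂ * Q₁) := by
    rw [← mul_assoc, ← mul_assoc, hP, mul_assoc]
  have f4 : Pm * (Pm * Q₁ * (Pm * Q₂)) = 0 := by
    rw [← mul_assoc, ← mul_assoc, ← mul_assoc, hP, mul_assoc, ← mul_assoc, h1, Matrix.zero_mul]
  have f4' : Pm * (Pm * Q₂ * (Pm * Q₁)) = 0 := by
    rw [← mul_assoc, ← mul_assoc, ← mul_assoc, hP, mul_assoc, ← mul_assoc, h2, Matrix.zero_mul]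
  simp only [mul_add, add_mul, smul_mul_assoc, mul_smul_comm, smul_smul, Matrix.trace_add,
    Matrix.trace_smul, Matrix.mul_sub, Matrix.trace_sub, f1, f2, f3, f3', f4, f4',
    Matrix.trace_zero, smul_zero, smul_eq_mul]
  ring

lemma deriv_idem {N : ℕ} (f : ℝ → Matrix (Fin N) (Fin N) ℂ) (x : ℝ)
    (hd : ∀ a b, DifferentiableAt ℝ (fun s => f s a b) x)
    (hidem : ∀ s, f s * f s = f s) :
    (Matrix.of fun a b => deriv (fun s => f s a b) x) * f x +
      f x * (Matrix.of fun a b => deriv (fun s => f s a b) x)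
    = Matrix.of fun a b => deriv (fun s => f s a b) x := by
  ext a b
  simp only [Matrix.add_apply, Matrix.mul_apply, Matrix.of_apply]
  have hsum : HasDerivAt (fun s => ∑ j, f s a j * f s j b)
      (∑ j, (deriv (fun s => f s a j) x * f x j b + f x a j * deriv (fun s => f s j b) x)) x :=
    HasDerivAt.fun_sum fun j _ => ((hd a j).hasDerivAt.mul (hd j b).hasDerivAt)
  have heq : (fun s => ∑ j, f s a j * f s j b) = fun s => f s a b :=
    funext fun s => by rw [← Matrix.mul_apply, hidem s]
  rw [heq] at hsum
  rw [Finset.sum_add_distrib] at hsum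
  exact (hsum.deriv).symm

lemma pqp_zero {N : ℕ} (Pm Q : Matrix (Fin N) (Fin N) ℂ) (hP : Pm * Pm = Pm)
    (hQ : Q * Pm + Pm * Q = Q) : Pm * Q * Pm = 0 := by
  have h : Pm * (Q * Pm + Pm * Q) * Pm = Pm * Q * Pm := congrArg (fun X => Pm * X * Pm) hQ
  have e1 : Pm * (Q * Pm + Pm * Q) * Pm = Pm * Q * Pm + Pm * Q * Pm := by
    rw [Matrix.mul_add, Matrix.add_mul]
    congr 1
    · rw [← mul_assoc, mul_assoc (Pm * Q) Pm Pm, hP]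
    · rw [← mul_assoc, hP]
  rw [e1] at h
  have h2 : Pm * Q * Pm + Pm * Q * Pm = Pm * Q * Pm + 0 := by rw [h, add_zero]
  exact add_left_cancel h2

lemma hexp_deriv (t : ℝ) :
    HasDerivAt (fun s : ℝ => Complex.exp ((Real.pi : ℂ) * I * s))
      ((Real.pi : ℂ) * I * Complex.exp ((Real.pi : ℂ) * I * t)) t := by
  have h1 : HasDerivAt (fun z : ℂ => Complex.exp ((Real.pi : ℂ) * I * z))
      ((Real.pi : ℂ) * I * Complex.exp ((Real.pi : ℂ) * I * t)) (t : ℂ) := by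
    simpa [mul_comm] using ((hasDerivAt_id ((t : ℝ) : ℂ)).const_mul ((Real.pi : ℂ) * I)).cexp
  exact h1.comp_ofReal

lemma inv_one_add_smul {N : ℕ} (Pm : Matrix (Fin N) (Fin N) ℂ) (hP : Pm * Pm = Pm) (c : ℂ) :
    ((1 : Matrix (Fin N) (Fin N) ℂ) + (Complex.exp c - 1) • Pm)⁻¹
      = 1 + (Complex.exp (-c) - 1) • Pm := by
  apply Matrix.inv_eq_right_inv
  have hxy : Complex.exp c * Complex.exp (-c) = 1 := by
    rw [← Complex.exp_add]; simp
  have hco : (Complex.exp (-c) - 1) + ((Complex.exp c - 1)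
      + (Complex.exp c - 1) * (Complex.exp (-c) - 1)) = 0 := by
    linear_combination hxy
  simp only [Matrix.mul_add, Matrix.add_mul, Matrix.one_mul, Matrix.mul_one,
    smul_mul_assoc, mul_smul_comm, smul_smul, hP]
  simp only [smul_add, smul_smul]
  ext i j
  simp only [Matrix.add_apply, Matrix.smul_apply, smul_eq_mul]
  linear_combination Pm i j * hxy

/-- For a smooth `2πℤ²`-periodic family of orthogonal projectors `P(k)`
on `ℂ^N`, with `Ũ(t,k) := exp(iπt P(k))` (an extension of `U_P = 1 - 2P` to
`[0,1] × 𝕋²`), the Wess–Zumino action satisfies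
`(1/12π)∫_{[0,1]×𝕋²} Tr{(Ũ⁻¹dŨ)³} = π·C₁(P)` where `C₁(P)` is the Chern number;
in particular `e^{i S_WZ[U_P]} = (-1)^{C₁(P)}`. -/
theorem wess_zumino_action_of_one_sub_two_proj_eq_pi_chern
    (N : ℕ) (P : ℝ → ℝ → Matrix (Fin N) (Fin N) ℂ)
    (hsmooth : ∀ i j, ContDiff ℝ (⊤ : ℕ∞) fun k : ℝ × ℝ => P k.1 k.2 i j)
    (hper : ∀ k₁ k₂, P (k₁ + 2 * Real.pi) k₂ = P k₁ k₂ ∧ P k₁ (k₂ + 2 * Real.pi) = P k₁ k₂)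
    (hproj : ∀ k₁ k₂, P k₁ k₂ * P k₁ k₂ = P k₁ k₂)
    (hherm : ∀ k₁ k₂, (P k₁ k₂)ᴴ = P k₁ k₂)
    (U : ℝ → ℝ → ℝ → Matrix (Fin N) (Fin N) ℂ)
    (hU : ∀ t k₁ k₂, U t k₁ k₂ = NormedSpace.exp ((Real.pi * I * t) • P k₁ k₂))
    -- components of the matrix 1-form `Ũ⁻¹ dŨ` in the coordinates (t, k₁, k₂):
    (A : ℝ → ℝ → ℝ → Fin 3 → Matrix (Fin N) (Fin N) ℂ)
    (hA0 : ∀ t k₁ k₂, A t k₁ k₂ 0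
      = (U t k₁ k₂)⁻¹ * Matrix.of (fun a b => deriv (fun s => U s k₁ k₂ a b) t))
    (hA1 : ∀ t k₁ k₂, A t k₁ k₂ 1
      = (U t k₁ k₂)⁻¹ * Matrix.of (fun a b => deriv (fun s => U t s k₂ a b) k₁))
    (hA2 : ∀ t k₁ k₂, A t k₁ k₂ 2
      = (U t k₁ k₂)⁻¹ * Matrix.of (fun a b => deriv (fun s => U t k₁ s a b) k₂))
    -- the dt∧dk₁∧dk₂ coefficient of the 3-form Tr{(Ũ⁻¹dŨ)³}:
    (W3 : ℝ → ℝ → ℝ → ℂ)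
    (hW3 : ∀ t k₁ k₂, W3 t k₁ k₂ = ∑ σ : Equiv.Perm (Fin 3),
      ((Equiv.Perm.sign σ : ℤ) : ℂ) *
        Matrix.trace (A t k₁ k₂ (σ 0) * A t k₁ k₂ (σ 1) * A t k₁ k₂ (σ 2)))
    -- the Wess–Zumino action computed with the extension Ũ:
    (S : ℂ)
    (hS : S = (1 / (12 * (Real.pi : ℂ))) *
      ∫ t in (0:ℝ)..1, ∫ k₁ in (0:ℝ)..(2 * Real.pi), ∫ k₂ in (0:ℝ)..(2 * Real.pi),
        W3 t k₁ k₂)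
    -- the Chern number C₁(P) = (1/2π)∫_{𝕋²} (-i)Tr{P[∂₁P, ∂₂P]}:
    (C₁ : ℂ)
    (hC₁ : C₁ = (1 / (2 * (Real.pi : ℂ))) *
      ∫ k₁ in (0:ℝ)..(2 * Real.pi), ∫ k₂ in (0:ℝ)..(2 * Real.pi),
        (-I) * Matrix.trace (P k₁ k₂ *
          (Matrix.of (fun a b => deriv (fun s => P s k₂ a b) k₁) *
             Matrix.of (fun a b => deriv (fun s => P k₁ s a b) k₂)
           - Matrix.of (fun a b => deriv (fun s => P k₁ s a b) k₂) *
             Matrix.of (fun a b => deriv (fun s => P s k₂ a b) k₁)))) :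
    S = (Real.pi : ℂ) * C₁ ∧
    ∀ c : ℤ, C₁ = (c : ℂ) → Complex.exp (I * S) = (-1 : ℂ) ^ c := by
  have hπ : ((Real.pi : ℂ)) ≠ 0 := Complex.ofReal_ne_zero.mpr Real.pi_ne_zero
  -- differentiability of entries
  have hd1 : ∀ (k₁ k₂ : ℝ) (a b : Fin N), DifferentiableAt ℝ (fun s => P s k₂ a b) k₁ := by
    intro k₁ k₂ a b
    exact (((hsmooth a b).differentiable (by simp)).comp
      (differentiable_id.prodMk (differentiable_const k₂))) k₁
  have hd2 : ∀ (k₁ k₂ : ℝ) (a b : Fin N), DifferentiableAt ℝ (fun s => P k₁ s a b) k₂ := by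
    intro k₁ k₂ a b
    exact (((hsmooth a b).differentiable (by simp)).comp
      ((differentiable_const k₁).prodMk differentiable_id)) k₂
  -- form of U
  have hUf : ∀ t k₁ k₂ : ℝ, U t k₁ k₂
      = 1 + (Complex.exp ((Real.pi:ℂ) * I * t) - 1) • P k₁ k₂ := by
    intro t k₁ k₂; rw [hU]; exact exp_smul_proj _ (hproj k₁ k₂) _
  have hUinv : ∀ t k₁ k₂ : ℝ, (U t k₁ k₂)⁻¹
      = 1 + (Complex.exp (-((Real.pi:ℂ) * I * t)) - 1) • P k₁ k₂ := by
    intro t k₁ k₂; rw [hUf]; exact inv_one_add_smul _ (hproj k₁ k₂) _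
  have hxy : ∀ t : ℝ, Complex.exp ((Real.pi:ℂ)*I*t) * Complex.exp (-((Real.pi:ℂ)*I*t)) = 1 := by
    intro t; rw [← Complex.exp_add]; simp
  -- the three components of the 1-form
  have hA0' : ∀ t k₁ k₂ : ℝ, A t k₁ k₂ 0 = ((Real.pi:ℂ) * I) • P k₁ k₂ := by
    intro t k₁ k₂
    rw [hA0]
    have hof : (Matrix.of fun a b => deriv (fun s => U s k₁ k₂ a b) t)
        = ((Real.pi:ℂ) * I * Complex.exp ((Real.pi:ℂ)*I*t)) • P k₁ k₂ := by
      ext a b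
      have hfun : (fun s : ℝ => U s k₁ k₂ a b)
          = fun s : ℝ => (1 : Matrix (Fin N) (Fin N) ℂ) a b
              + (Complex.exp ((Real.pi:ℂ) * I * s) - 1) * P k₁ k₂ a b := by
        funext s; rw [hUf]
        simp [Matrix.add_apply, Matrix.smul_apply, smul_eq_mul]
      have hder : HasDerivAt (fun s : ℝ => (1 : Matrix (Fin N) (Fin N) ℂ) a b
          + (Complex.exp ((Real.pi:ℂ) * I * s) - 1) * P k₁ k₂ a b)
          ((Real.pi:ℂ) * I * Complex.exp ((Real.pi:ℂ)*I*t) * P k₁ k₂ a b) t :=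
        (((hexp_deriv t).sub_const 1).mul_const _).const_add _
      rw [Matrix.of_apply, hfun, hder.deriv]
      simp [Matrix.smul_apply, smul_eq_mul]
    rw [hof, hUinv]
    simp only [Matrix.add_mul, Matrix.one_mul, smul_mul_assoc, mul_smul_comm, smul_smul,
      hproj k₁ k₂]
    ext i j
    simp only [Matrix.add_apply, Matrix.smul_apply, smul_eq_mul]
    linear_combination (Real.pi:ℂ) * I * (P k₁ k₂ i j) * hxy t
  have hA1' : ∀ t k₁ k₂ : ℝ, A t k₁ k₂ 1
      = (Complex.exp ((Real.pi:ℂ)*I*t) - 1) •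
          (Matrix.of fun a b => deriv (fun s => P s k₂ a b) k₁)
        + ((Complex.exp ((Real.pi:ℂ)*I*t) - 1) * (Complex.exp (-((Real.pi:ℂ)*I*t)) - 1)) •
          (P k₁ k₂ * (Matrix.of fun a b => deriv (fun s => P s k₂ a b) k₁)) := by
    intro t k₁ k₂
    rw [hA1]
    have hof : (Matrix.of fun a b => deriv (fun s => U t s k₂ a b) k₁)
        = (Complex.exp ((Real.pi:ℂ)*I*t) - 1) •
            (Matrix.of fun a b => deriv (fun s => P s k₂ a b) k₁) := by
      ext a b
      have hfun : (fun s : ℝ => U t s k₂ a b)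
          = fun s : ℝ => (1 : Matrix (Fin N) (Fin N) ℂ) a b
              + (Complex.exp ((Real.pi:ℂ) * I * t) - 1) * P s k₂ a b := by
        funext s; rw [hUf]
        simp [Matrix.add_apply, Matrix.smul_apply, smul_eq_mul]
      rw [Matrix.of_apply, hfun, deriv_const_add, deriv_const_mul _ (hd1 k₁ k₂ a b)]
      simp [Matrix.smul_apply, Matrix.of_apply, smul_eq_mul]
    rw [hof, hUinv]
    simp only [Matrix.add_mul, Matrix.one_mul, smul_mul_assoc, mul_smul_comm, smul_smul]
    rw [smul_add, smul_smul]
  have hA2' : ∀ t k₁ k₂ : ℝ, A t k₁ k₂ 2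
      = (Complex.exp ((Real.pi:ℂ)*I*t) - 1) •
          (Matrix.of fun a b => deriv (fun s => P k₁ s a b) k₂)
        + ((Complex.exp ((Real.pi:ℂ)*I*t) - 1) * (Complex.exp (-((Real.pi:ℂ)*I*t)) - 1)) •
          (P k₁ k₂ * (Matrix.of fun a b => deriv (fun s => P k₁ s a b) k₂)) := by
    intro t k₁ k₂
    rw [hA2]
    have hof : (Matrix.of fun a b => deriv (fun s => U t k₁ s a b) k₂)
        = (Complex.exp ((Real.pi:ℂ)*I*t) - 1) •
            (Matrix.of fun a b => deriv (fun s => P k₁ s a b) k₂) := by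
      ext a b
      have hfun : (fun s : ℝ => U t k₁ s a b)
          = fun s : ℝ => (1 : Matrix (Fin N) (Fin N) ℂ) a b
              + (Complex.exp ((Real.pi:ℂ) * I * t) - 1) * P k₁ s a b := by
        funext s; rw [hUf]
        simp [Matrix.add_apply, Matrix.smul_apply, smul_eq_mul]
      rw [Matrix.of_apply, hfun, deriv_const_add, deriv_const_mul _ (hd2 k₁ k₂ a b)]
      simp [Matrix.smul_apply, Matrix.of_apply, smul_eq_mul]
    rw [hof, hUinv]
    simp only [Matrix.add_mul, Matrix.one_mul, smul_mul_assoc, mul_smul_comm, smul_smul]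
    rw [smul_add, smul_smul]
  -- P Q P = 0
  have hpqp1 : ∀ k₁ k₂ : ℝ,
      P k₁ k₂ * (Matrix.of fun a b => deriv (fun s => P s k₂ a b) k₁) * P k₁ k₂ = 0 := by
    intro k₁ k₂
    exact pqp_zero _ _ (hproj k₁ k₂)
      (deriv_idem (fun s => P s k₂) k₁ (fun a b => hd1 k₁ k₂ a b) (fun s => hproj s k₂))
  have hpqp2 : ∀ k₁ k₂ : ℝ,
      P k₁ k₂ * (Matrix.of fun a b => deriv (fun s => P k₁ s a b) k₂) * P k₁ k₂ = 0 := by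
    intro k₁ k₂
    exact pqp_zero _ _ (hproj k₁ k₂)
      (deriv_idem (fun s => P k₁ s) k₂ (fun a b => hd2 k₁ k₂ a b) (fun s => hproj k₁ s))
  -- the value of W3
  have hW3' : ∀ t k₁ k₂ : ℝ, W3 t k₁ k₂
      = (3 * ((Real.pi:ℂ) * I) * ((2 * Real.cos (Real.pi * t) - 2 : ℝ) : ℂ)) *
          Matrix.trace (P k₁ k₂ *
            (Matrix.of (fun a b => deriv (fun s => P s k₂ a b) k₁) *
               Matrix.of (fun a b => deriv (fun s => P k₁ s a b) k₂)
             - Matrix.of (fun a b => deriv (fun s => P k₁ s a b) k₂) *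
               Matrix.of (fun a b => deriv (fun s => P s k₂ a b) k₁))) := by
    intro t k₁ k₂
    rw [hW3, perm3_sum (A t k₁ k₂), hA0' t k₁ k₂, hA1' t k₁ k₂, hA2' t k₁ k₂,
      key_trace _ _ _ (hproj k₁ k₂) (hpqp1 k₁ k₂) (hpqp2 k₁ k₂)]
    have hsum : Complex.exp ((Real.pi:ℂ)*I*t) + Complex.exp (-((Real.pi:ℂ)*I*t))
        = ((2 * Real.cos (Real.pi * t) : ℝ) : ℂ) := by
      have hx : (Real.pi:ℂ) * I * t = ((Real.pi * t : ℝ) : ℂ) * I := by push_cast; ring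
      rw [hx]
      have hy : -((((Real.pi * t : ℝ)) : ℂ) * I) = ((-(Real.pi * t) : ℝ) : ℂ) * I := by
        push_cast; ring
      rw [hy, Complex.exp_mul_I, Complex.exp_mul_I, Complex.ofReal_neg, Complex.cos_neg,
        Complex.sin_neg]
      push_cast
      ring
    have hpoly : (Complex.exp ((Real.pi:ℂ)*I*t) - 1)^2
        + ((Complex.exp ((Real.pi:ℂ)*I*t) - 1) * (Complex.exp (-((Real.pi:ℂ)*I*t)) - 1)) *
          (Complex.exp ((Real.pi:ℂ)*I*t) - 1)
        = ((2 * Real.cos (Real.pi * t) - 2 : ℝ) : ℂ) := by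
      rw [Complex.ofReal_sub, ← hsum, Complex.ofReal_ofNat]
      linear_combination (Complex.exp ((Real.pi:ℂ)*I*t) - 2) * hxy t
    rw [hpoly]
    ring
  -- the double integral of the Berry curvature
  set D : ℂ := ∫ k₁ in (0:ℝ)..(2 * Real.pi), ∫ k₂ in (0:ℝ)..(2 * Real.pi),
      Matrix.trace (P k₁ k₂ *
        (Matrix.of (fun a b => deriv (fun s => P s k₂ a b) k₁) *
           Matrix.of (fun a b => deriv (fun s => P k₁ s a b) k₂)
         - Matrix.of (fun a b => deriv (fun s => P k₁ s a b) k₂) *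
           Matrix.of (fun a b => deriv (fun s => P s k₂ a b) k₁))) with hD
  have hreal : (∫ t in (0:ℝ)..1, (2 * Real.cos (Real.pi * t) - 2)) = -2 := by
    have hderiv : ∀ u ∈ Set.uIcc (0:ℝ) 1,
        HasDerivAt (fun v => 2 / Real.pi * Real.sin (Real.pi * v) - 2 * v)
          (2 * Real.cos (Real.pi * u) - 2) u := by
      intro u _
      have h1 : HasDerivAt (fun v : ℝ => Real.pi * v) Real.pi u := by
        simpa using (hasDerivAt_id u).const_mul Real.pi
      have h4 := (h1.sin.const_mul (2 / Real.pi)).sub ((hasDerivAt_id u).const_mul (2:ℝ))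
      refine h4.congr_deriv ?_
      rw [mul_comm (Real.cos _) Real.pi, ← mul_assoc, div_mul_cancel₀ _ Real.pi_ne_zero]
      ring
    rw [intervalIntegral.integral_eq_sub_of_hasDerivAt hderiv
      (Continuous.intervalIntegrable
      ((continuous_const.mul (Real.continuous_cos.comp (continuous_const.mul continuous_id))).sub
        continuous_const) _ _)]
    simp [Real.sin_pi]
  have hSval : S = (1 / (12 * (Real.pi : ℂ))) * ((3 * ((Real.pi:ℂ) * I) * ((-2 : ℝ) : ℂ)) * D) := by
    rw [hS]
    congr 1
    calc (∫ t in (0:ℝ)..1, ∫ k₁ in (0:ℝ)..(2 * Real.pi), ∫ k₂ in (0:ℝ)..(2 * Real.pi),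
            W3 t k₁ k₂)
        = ∫ t in (0:ℝ)..1, (3 * ((Real.pi:ℂ) * I) * ((2 * Real.cos (Real.pi * t) - 2 : ℝ) : ℂ)) * D := by
          rw [hD]
          apply intervalIntegral.integral_congr
          intro t _
          simp_rw [hW3', intervalIntegral.integral_const_mul]
      _ = (∫ t in (0:ℝ)..1, (3 * ((Real.pi:ℂ) * I) * ((2 * Real.cos (Real.pi * t) - 2 : ℝ) : ℂ))) * D :=
          intervalIntegral.integral_mul_const _ _
      _ = (3 * ((Real.pi:ℂ) * I) * ((-2 : ℝ) : ℂ)) * D := by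
          congr 1
          rw [intervalIntegral.integral_const_mul, ← hreal, intervalIntegral.integral_ofReal]
  have hC₁val : C₁ = (1 / (2 * (Real.pi : ℂ))) * ((-I) * D) := by
    rw [hC₁]
    congr 1
    rw [hD]
    calc (∫ k₁ in (0:ℝ)..(2 * Real.pi), ∫ k₂ in (0:ℝ)..(2 * Real.pi),
            (-I) * Matrix.trace (P k₁ k₂ *
              (Matrix.of (fun a b => deriv (fun s => P s k₂ a b) k₁) *
                 Matrix.of (fun a b => deriv (fun s => P k₁ s a b) k₂)
               - Matrix.of (fun a b => deriv (fun s => P k₁ s a b) k₂) *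
                 Matrix.of (fun a b => deriv (fun s => P s k₂ a b) k₁))))
        = ∫ k₁ in (0:ℝ)..(2 * Real.pi), (-I) * ∫ k₂ in (0:ℝ)..(2 * Real.pi),
            Matrix.trace (P k₁ k₂ *
              (Matrix.of (fun a b => deriv (fun s => P s k₂ a b) k₁) *
                 Matrix.of (fun a b => deriv (fun s => P k₁ s a b) k₂)
               - Matrix.of (fun a b => deriv (fun s => P k₁ s a b) k₂) *
                 Matrix.of (fun a b => deriv (fun s => P s k₂ a b) k₁))) := by
          apply intervalIntegral.integral_congr
          intro k₁ _
          simp_rw [intervalIntegral.integral_const_mul]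
      _ = _ := intervalIntegral.integral_const_mul _ _
  have hmain : S = (Real.pi : ℂ) * C₁ := by
    rw [hSval, hC₁val]
    field_simp
    push_cast
    ring
  refine ⟨hmain, ?_⟩
  intro c hc
  rw [hmain, hc]
  have hrw : I * ((Real.pi : ℂ) * (c : ℂ)) = (c : ℂ) * ((Real.pi : ℂ) * I) := by ring
  rw [hrw, Complex.exp_int_mul, Complex.exp_pi_mul_I]
end

section
/- The square root of the Berry phase, defined as exp(-(i/2)∮_𝕋 A) where A is computed with respect to a smooth, periodic, time-reversal symmetric Bloch frame over a loop invariant under k ↦ -k, is independent of the choice of such a frame: for two time-reversal symmetric frames, ∮_𝕋 A' - ∮_𝕋 A ∈ 4πℤ. -/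
set_option maxHeartbeats 1000000

open Matrix Complex

theorem quatDetAux (N : ℕ) :
    ∀ (V : Type) [NormedAddCommGroup V] [InnerProductSpace ℂ V] [FiniteDimensional ℂ V]
      (u : V →ₗ[ℂ] V) (j : V → V),
      Module.finrank ℂ V = N →
      (∀ x y : V, (inner ℂ (u x) (u y) : ℂ) = inner ℂ x y) →
      (∀ x y, j (x + y) = j x + j y) →
      (∀ (c : ℂ) x, j (c • x) = (starRingEnd ℂ c) • j x) →
      (∀ x y : V, (inner ℂ (j x) (j y) : ℂ) = inner ℂ y x) →
      (∀ x, j (j x) = -x) →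
      (∀ x, u (j x) = j (u x)) →
      LinearMap.det u = 1 := by
  induction N using Nat.strong_induction_on with
  | _ N IH =>
  intro V _ _ _ u j hN hu hja hjc hji hjj huj
  rcases Nat.eq_zero_or_pos N with h0 | hpos
  · subst h0
    haveI : Subsingleton V := Module.finrank_zero_iff.mp hN
    have : u = LinearMap.id := LinearMap.ext fun x => Subsingleton.elim _ _
    rw [this, LinearMap.det_id]
  · haveI : Nontrivial V := by
      apply Module.nontrivial_of_finrank_pos (R := ℂ)
      omega
    obtain ⟨lam, hlam⟩ := Module.End.exists_eigenvalue (u : Module.End ℂ V)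
    obtain ⟨v₀, hv₀⟩ := hlam.exists_hasEigenvector
    have hv₀ne : v₀ ≠ 0 := hv₀.right
    have hnrm : (‖v₀‖ : ℂ) ≠ 0 := by
      simpa using norm_ne_zero_iff.mpr hv₀ne
    obtain ⟨v, hv⟩ : ∃ v : V, v = ((‖v₀‖ : ℂ))⁻¹ • v₀ := ⟨_, rfl⟩
    have hvnorm : (inner ℂ v v : ℂ) = 1 := by
      rw [hv, inner_smul_left, inner_smul_right, inner_self_eq_norm_sq_to_K]
      rw [map_inv₀, Complex.conj_ofReal]
      field_simp
      ring
      norm_cast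
    have huv : u v = lam • v := by
      rw [hv, u.map_smul, hv₀.apply_eq_smul, smul_comm]
    have hll : (starRingEnd ℂ) lam * lam = 1 := by
      have h := hu v v
      rw [huv, inner_smul_left, inner_smul_right, hvnorm, mul_one] at h
      exact h
    obtain ⟨w, hw⟩ : ∃ w : V, w = j v := ⟨_, rfl⟩
    have hjw : j w = -v := by rw [hw, hjj]
    have huw : u w = (starRingEnd ℂ) lam • w := by
      rw [hw, huj, huv, hjc]
    have hwv : (inner ℂ w v : ℂ) = 0 := by
      have h := hji v w
      rw [← hw, hjw, inner_neg_right] at h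
      linear_combination (-1/2 : ℂ) * h
    have hvw : (inner ℂ v w : ℂ) = 0 := by
      rw [← inner_conj_symm, hwv, map_zero]
    have hww : (inner ℂ w w : ℂ) = 1 := by
      rw [hw, hji, hvnorm]
    have hon : Orthonormal ℂ ![v, w] := by
      have hvn : ‖v‖ = 1 := by
        have h : ‖v‖ ^ 2 = 1 := by
          rw [← inner_self_eq_norm_sq (𝕜 := ℂ), hvnorm]
          simp
        nlinarith [norm_nonneg v]
      have hwn : ‖w‖ = 1 := by
        have h : ‖w‖ ^ 2 = 1 := by
          rw [← inner_self_eq_norm_sq (𝕜 := ℂ), hww]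
          simp
        nlinarith [norm_nonneg w]
      rw [orthonormal_iff_ite]
      intro i j'
      fin_cases i <;> fin_cases j' <;>
        simp [hvnorm, hvw, hwv, hww, hvn, hwn]
    have hli := hon.linearIndependent
    obtain ⟨W, hW⟩ : ∃ W : Submodule ℂ V, W = Submodule.span ℂ (Set.range ![v, w]) := ⟨_, rfl⟩
    have hrange : Set.range ![v, w] = {v, w} := by
      ext y
      constructor
      · rintro ⟨i, rfl⟩
        fin_cases i
        · exact Or.inl rfl
        · exact Or.inr rfl
      · rintro (rfl | rfl)
        · exact ⟨0, rfl⟩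
        · exact ⟨1, rfl⟩
    have hmem : ∀ x, x ∈ W ↔ ∃ a b : ℂ, a • v + b • w = x := by
      intro x
      rw [hW, hrange]
      exact Submodule.mem_span_pair
    have hvW : v ∈ W := hW ▸ Submodule.subset_span ⟨0, rfl⟩
    have hwW : w ∈ W := hW ▸ Submodule.subset_span ⟨1, rfl⟩
    have hWu : ∀ x ∈ W, u x ∈ W := by
      intro x hx
      rcases (hmem x).mp hx with ⟨a, b, rfl⟩
      rw [map_add, u.map_smul, u.map_smul, huv, huw]
      exact W.add_mem (W.smul_mem _ (W.smul_mem _ hvW)) (W.smul_mem _ (W.smul_mem _ hwW))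
    have hCu : ∀ x ∈ Wᗮ, u x ∈ Wᗮ := by
      intro x hx
      rw [Submodule.mem_orthogonal]
      intro y hy
      rcases (hmem y).mp hy with ⟨a, b, rfl⟩
      have hxv : (inner ℂ v x : ℂ) = 0 := (Submodule.mem_orthogonal W x).mp hx v hvW
      have hxw : (inner ℂ w x : ℂ) = 0 := (Submodule.mem_orthogonal W x).mp hx w hwW
      have h1 : (inner ℂ v (u x) : ℂ) = 0 := by
        have hvv : u ((starRingEnd ℂ) lam • v) = v := by
          rw [u.map_smul, huv, smul_smul, hll, one_smul]
        calc (inner ℂ v (u x) : ℂ) = inner ℂ (u ((starRingEnd ℂ) lam • v)) (u x) := by rw [hvv]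
          _ = inner ℂ ((starRingEnd ℂ) lam • v) x := hu _ _
          _ = lam * inner ℂ v x := by rw [inner_smul_left, RingHomCompTriple.comp_apply]; simp
          _ = 0 := by rw [hxv, mul_zero]
      have h2 : (inner ℂ w (u x) : ℂ) = 0 := by
        have hvv : u (lam • w) = w := by
          rw [u.map_smul, huw, smul_smul, mul_comm, hll, one_smul]
        calc (inner ℂ w (u x) : ℂ) = inner ℂ (u (lam • w)) (u x) := by rw [hvv]
          _ = inner ℂ (lam • w) x := hu _ _
          _ = (starRingEnd ℂ) lam * inner ℂ w x := by rw [inner_smul_left]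
          _ = 0 := by rw [hxw, mul_zero]
      rw [inner_add_left, inner_smul_left, inner_smul_left, h1, h2]
      simp
    have hCj : ∀ x ∈ Wᗮ, j x ∈ Wᗮ := by
      intro x hx
      rw [Submodule.mem_orthogonal]
      intro y hy
      rcases (hmem y).mp hy with ⟨a, b, rfl⟩
      have hxv : (inner ℂ v x : ℂ) = 0 := (Submodule.mem_orthogonal W x).mp hx v hvW
      have hxw : (inner ℂ w x : ℂ) = 0 := (Submodule.mem_orthogonal W x).mp hx w hwW
      have h1 : (inner ℂ v (j x) : ℂ) = 0 := by
        have : v = -(j w) := by rw [hjw, neg_neg]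
        rw [this, inner_neg_left, hji]
        rw [← inner_conj_symm, hxw]
        simp
      have h2 : (inner ℂ w (j x) : ℂ) = 0 := by
        rw [hw, hji]
        rw [← inner_conj_symm, hxv]
        simp
      rw [inner_add_left, inner_smul_left, inner_smul_left, h1, h2]
      simp
    -- basis of W
    have hbli : LinearIndependent ℂ ![v, w] := hli
    obtain ⟨bW, hbW⟩ : ∃ bW : Module.Basis (Fin 2) ℂ ↥W,
        ((bW 0 : V) = v ∧ (bW 1 : V) = w) := by
      refine ⟨(Module.Basis.span hbli).map (LinearEquiv.ofEq _ _ (by rw [hW])), ?_, ?_⟩ <;>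
        simp [Module.Basis.span_apply]
    have hfrW : Module.finrank ℂ ↥W = 2 := by
      rw [hW]
      simpa using finrank_span_eq_card hbli
    have hcompl : IsCompl W Wᗮ := Submodule.isCompl_orthogonal_of_hasOrthogonalProjection
    obtain ⟨Eql, hEql⟩ : ∃ Eql : (↥W × ↥Wᗮ) ≃ₗ[ℂ] V,
        ∀ p : ↥W × ↥Wᗮ, Eql p = (p.1 : V) + (p.2 : V) :=
      ⟨W.prodEquivOfIsCompl Wᗮ hcompl, fun p => Submodule.coe_prodEquivOfIsCompl' _ _ _ p⟩
    obtain ⟨uW, huW⟩ : ∃ uW : ↥W →ₗ[ℂ] ↥W, ∀ x : ↥W, (uW x : V) = u x :=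
      ⟨u.restrict hWu, fun x => LinearMap.restrict_coe_apply _ _ _⟩
    obtain ⟨uC, huC⟩ : ∃ uC : ↥Wᗮ →ₗ[ℂ] ↥Wᗮ, ∀ x : ↥Wᗮ, (uC x : V) = u x :=
      ⟨u.restrict hCu, fun x => LinearMap.restrict_coe_apply _ _ _⟩
    have hud : u = Eql.toLinearMap ∘ₗ (LinearMap.prodMap uW uC) ∘ₗ Eql.symm.toLinearMap := by
      apply LinearMap.ext
      intro x
      obtain ⟨p, rfl⟩ := Eql.surjective x
      simp only [LinearMap.comp_apply, LinearEquiv.coe_coe, LinearEquiv.symm_apply_apply]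
      rw [hEql, hEql, map_add]
      simp only [LinearMap.prodMap_apply]
      rw [huW, huC]
    have hdetsplit : LinearMap.det u = LinearMap.det uW * LinearMap.det uC := by
      rw [hud, LinearMap.det_conj (LinearMap.prodMap uW uC) Eql]
      let bC := Module.finBasis ℂ ↥Wᗮ
      rw [← LinearMap.det_toMatrix (bW.prod bC), LinearMap.toMatrix_prodMap bW bC uW uC,
        Matrix.det_fromBlocks_zero₂₁, LinearMap.det_toMatrix, LinearMap.det_toMatrix]
    have huWb0 : uW (bW 0) = lam • bW 0 := by
      apply Subtype.ext
      rw [huW]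
      push_cast
      rw [hbW.1, huv]
    have huWb1 : uW (bW 1) = (starRingEnd ℂ) lam • bW 1 := by
      apply Subtype.ext
      rw [huW]
      push_cast
      rw [hbW.2, huw]
    have hdetW : LinearMap.det uW = 1 := by
      rw [← LinearMap.det_toMatrix bW]
      have hm : LinearMap.toMatrix bW bW uW = !![lam, 0; 0, (starRingEnd ℂ) lam] := by
        ext i jj
        fin_cases jj <;> fin_cases i <;>
          simp [LinearMap.toMatrix_apply, huWb0, huWb1, Finsupp.single_apply]
      rw [hm, Matrix.det_fin_two_of]
      rw [mul_comm] at hll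
      rw [hll]
      ring
    have hfrC : Module.finrank ℂ ↥Wᗮ = N - 2 := by
      have hsum := Submodule.finrank_add_finrank_orthogonal W
      rw [hfrW, hN] at hsum
      omega
    have hNge : 2 ≤ N := by
      have hsum := Submodule.finrank_add_finrank_orthogonal W
      rw [hfrW, hN] at hsum
      omega
    obtain ⟨jC, hjC⟩ : ∃ jC : ↥Wᗮ → ↥Wᗮ, ∀ x : ↥Wᗮ, (jC x : V) = j x :=
      ⟨fun x => ⟨j x, hCj x x.2⟩, fun x => rfl⟩
    have hdetC : LinearMap.det uC = 1 := by
      refine IH (N - 2) (by omega) ↥Wᗮ uC jC hfrC ?_ ?_ ?_ ?_ ?_ ?_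
      · intro x y
        rw [Submodule.coe_inner, Submodule.coe_inner, huC, huC]
        exact hu _ _
      · intro x y
        apply Subtype.ext
        push_cast [hjC]
        exact hja _ _
      · intro cc x
        apply Subtype.ext
        push_cast [hjC]
        exact hjc _ _
      · intro x y
        rw [Submodule.coe_inner, Submodule.coe_inner, hjC, hjC]
        exact hji _ _
      · intro x
        apply Subtype.ext
        push_cast [hjC]
        rw [hjj]
      · intro x
        apply Subtype.ext
        rw [huC, hjC, hjC, huC, huj]
    rw [hdetsplit, hdetW, hdetC, one_mul]

section Part2
variable {n : ℕ}

theorem quatMatrixDet (A : Matrix (Fin n × Fin 2) (Fin n × Fin 2) ℂ)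
    (hA : Aᴴ * A = 1)
    (h00 : ∀ l m : Fin n, A (l,0) (m,0) = starRingEnd ℂ (A (l,1) (m,1)))
    (h01 : ∀ l m : Fin n, A (l,0) (m,1) = -starRingEnd ℂ (A (l,1) (m,0))) :
    A.det = 1 := by
  classical
  have h11 : ∀ l m : Fin n, A (l,1) (m,1) = starRingEnd ℂ (A (l,0) (m,0)) := by
    intro l m; rw [h00]; simp
  have h10 : ∀ l m : Fin n, A (l,1) (m,0) = -starRingEnd ℂ (A (l,0) (m,1)) := by
    intro l m; rw [h01]; simp
  set U : EuclideanSpace ℂ (Fin n × Fin 2) →ₗ[ℂ] EuclideanSpace ℂ (Fin n × Fin 2) :=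
    Matrix.toEuclideanLin A with hU
  set jf : EuclideanSpace ℂ (Fin n × Fin 2) → EuclideanSpace ℂ (Fin n × Fin 2) := fun x => (WithLp.equiv 2 _).symm (fun p : Fin n × Fin 2 =>
      if p.2 = 0 then -(starRingEnd ℂ) (x (p.1, 1)) else (starRingEnd ℂ) (x (p.1, 0))) with hjf
  have hjf_apply : ∀ (x : EuclideanSpace ℂ (Fin n × Fin 2)) (p : Fin n × Fin 2),
      jf x p = if p.2 = 0 then -(starRingEnd ℂ) (x (p.1, 1)) else (starRingEnd ℂ) (x (p.1, 0)) := by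
    intro x p; rfl
  have hUapply : ∀ (x : EuclideanSpace ℂ (Fin n × Fin 2)) (p : Fin n × Fin 2),
      U x p = ∑ q, A p q * x q := by
    intro x p
    rw [hU, Matrix.toEuclideanLin_apply]
    rfl
  have hadj : ∀ y, (LinearMap.adjoint U) (U y) = y := by
    intro y
    have h1 : (LinearMap.adjoint U).comp U = LinearMap.id := by
      rw [hU, ← Matrix.toEuclideanLin_conjTranspose_eq_adjoint, Matrix.toEuclideanLin_eq_toLin,
        ← Matrix.toLin_mul (PiLp.basisFun 2 ℂ (Fin n × Fin 2)) (PiLp.basisFun 2 ℂ (Fin n × Fin 2))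
          (PiLp.basisFun 2 ℂ (Fin n × Fin 2)), hA, Matrix.toLin_one]
    exact LinearMap.ext_iff.mp h1 y
  have key : LinearMap.det U = 1 := by
    apply quatDetAux (Module.finrank ℂ (EuclideanSpace ℂ (Fin n × Fin 2)))
      (EuclideanSpace ℂ (Fin n × Fin 2)) U jf rfl
    · -- unitary
      intro x y
      calc (inner ℂ (U x) (U y) : ℂ) = inner ℂ x ((LinearMap.adjoint U) (U y)) :=
            (LinearMap.adjoint_inner_right U x (U y)).symm
        _ = inner ℂ x y := by rw [hadj]
    · -- additive
      intro x y
      ext p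
      simp only [hjf_apply, PiLp.add_apply, _root_.map_add]
      split_ifs <;> ring
    · -- conj-homogeneous
      intro c x
      ext p
      simp only [hjf_apply, PiLp.smul_apply, smul_eq_mul, _root_.map_mul]
      split_ifs <;> ring
    · -- antiunitary
      intro x y
      simp only [PiLp.inner_apply, RCLike.inner_apply, hjf_apply]
      rw [Fintype.sum_prod_type, Fintype.sum_prod_type]
      refine Finset.sum_congr rfl fun l _ => ?_
      rw [Fin.sum_univ_two, Fin.sum_univ_two]
      simp only [_root_.map_neg, Complex.conj_conj]
      norm_num
      ring
    · -- squares to -1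
      intro x
      ext p
      obtain ⟨l, s⟩ := p
      fin_cases s <;>
        simp [hjf_apply, PiLp.neg_apply, _root_.map_neg, Complex.conj_conj]
    · -- commutes with U
      intro x
      ext p
      obtain ⟨l, s⟩ := p
      fin_cases s
      · rw [hUapply, hjf_apply]
        simp only [hjf_apply, hUapply]
        norm_num
        rw [Fintype.sum_prod_type, Fintype.sum_prod_type, ← Finset.sum_neg_distrib]
        refine Finset.sum_congr rfl fun m _ => ?_
        rw [Fin.sum_univ_two, Fin.sum_univ_two, h00 l m, h01 l m]
        simp only [_root_.map_mul, _root_.map_neg, Complex.conj_conj]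
        norm_num
        try ring
      · rw [hUapply, hjf_apply]
        simp only [hjf_apply, hUapply]
        norm_num
        rw [Fintype.sum_prod_type, Fintype.sum_prod_type]
        refine Finset.sum_congr rfl fun m _ => ?_
        rw [Fin.sum_univ_two, Fin.sum_univ_two, h10 l m, h11 l m]
        simp only [_root_.map_mul, _root_.map_neg, Complex.conj_conj]
        norm_num
        try ring
  rw [hU, Matrix.toEuclideanLin_eq_toLin, LinearMap.det_toLin] at key
  exact key

end Part2

/-- The square root of the Berry phase, `exp(-(i/2)∮_𝕋 A)` computed
with respect to a smooth, periodic, time-reversal symmetric Bloch frame over a loop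
invariant under `k ↦ -k`, is frame-independent: for two time-reversal symmetric frames,
`∮_𝕋 A' - ∮_𝕋 A ∈ 4πℤ`. -/
theorem sqrt_berry_phase_well_defined
    (M n : ℕ)
    -- θ : antiunitary operator with θ² = -1 on ℂ^{2M}
    (θ : EuclideanSpace ℂ (Fin (2 * M)) → EuclideanSpace ℂ (Fin (2 * M)))
    (hadd : ∀ x y, θ (x + y) = θ x + θ y)
    (hconj : ∀ (c : ℂ) x, θ (c • x) = (starRingEnd ℂ c) • θ x)
    (hinner : ∀ x y, (inner ℂ (θ x) (θ y) : ℂ) = inner ℂ y x)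
    (hsq : ∀ x, θ (θ x) = -x)
    -- the family of rank-2n projectors, time-reversal symmetric
    (P : ℝ → EuclideanSpace ℂ (Fin (2 * M)) →ₗ[ℂ] EuclideanSpace ℂ (Fin (2 * M)))
    (hPTRS : ∀ k x, P (-k) x = θ (P k (θ (-x))))
    -- two smooth, periodic, time-reversal symmetric Bloch frames for P
    (e e' : ℝ → Fin n × Fin 2 → EuclideanSpace ℂ (Fin (2 * M)))
    (hsmooth : ∀ a, ContDiff ℝ (⊤ : ℕ∞) fun k => e k a)
    (hsmooth' : ∀ a, ContDiff ℝ (⊤ : ℕ∞) fun k => e' k a)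
    (hper : ∀ k a, e (k + 2 * Real.pi) a = e k a)
    (hper' : ∀ k a, e' (k + 2 * Real.pi) a = e' k a)
    (horth : ∀ k a b, (inner ℂ (e k a) (e k b) : ℂ) = if a = b then 1 else 0)
    (horth' : ∀ k a b, (inner ℂ (e' k a) (e' k b) : ℂ) = if a = b then 1 else 0)
    (hframe : ∀ k x, P k x = ∑ a, (inner ℂ (e k a) x : ℂ) • e k a)
    (hframe' : ∀ k x, P k x = ∑ a, (inner ℂ (e' k a) x : ℂ) • e' k a)
    -- time-reversal symmetry of the frames: e_{2j-1}(-k) = -θe_{2j}(k), e_{2j}(-k) = θe_{2j-1}(k)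
    (hTRS : ∀ k (j : Fin n), e (-k) (j, 0) = -θ (e k (j, 1)) ∧ e (-k) (j, 1) = θ (e k (j, 0)))
    (hTRS' : ∀ k (j : Fin n), e' (-k) (j, 0) = -θ (e' k (j, 1)) ∧ e' (-k) (j, 1) = θ (e' k (j, 0)))
    -- the Berry connections of the two frames
    (A A' : ℝ → ℂ)
    (hA : ∀ k, A k = -I * ∑ a, (inner ℂ (e k a) (deriv (fun t => e t a) k) : ℂ))
    (hA' : ∀ k, A' k = -I * ∑ a, (inner ℂ (e' k a) (deriv (fun t => e' t a) k) : ℂ)) :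
    ∃ m : ℤ,
      (∫ k in (-Real.pi)..Real.pi, A' k) - (∫ k in (-Real.pi)..Real.pi, A k)
        = 4 * (Real.pi : ℂ) * (m : ℂ) := by
  classical
  have hdiff : ∀ a, Differentiable ℝ fun k => e k a := fun a => (hsmooth a).differentiable (by simp)
  have hdiff' : ∀ a, Differentiable ℝ fun k => e' k a := fun a => (hsmooth' a).differentiable (by simp)
  -- the overlap matrix
  set U : ℝ → Matrix (Fin n × Fin 2) (Fin n × Fin 2) ℂ :=
    fun k => Matrix.of fun a b => (inner ℂ (e k a) (e' k b) : ℂ) with hUdef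
  have hUapp : ∀ k a b, U k a b = (inner ℂ (e k a) (e' k b) : ℂ) := fun k a b => rfl
  have hUsm : ∀ a b, ContDiff ℝ (⊤ : ℕ∞) fun k => U k a b := fun a b =>
    ContDiff.inner ℂ (hsmooth a) (hsmooth' b)
  -- frame expansion
  have hproj : ∀ k b, P k (e' k b) = e' k b := by
    intro k b
    calc P k (e' k b) = ∑ a, (if a = b then (1:ℂ) else 0) • e' k a := by
          rw [hframe']
          exact Finset.sum_congr rfl fun a _ => by rw [horth']
      _ = e' k b := by simp
  have hexp : ∀ k b, e' k b = ∑ a, U k a b • e k a := by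
    intro k b
    calc e' k b = P k (e' k b) := (hproj k b).symm
      _ = ∑ a, U k a b • e k a := by rw [hframe]; rfl
  -- unitarity
  have hunit : ∀ k, (U k)ᴴ * U k = 1 := by
    intro k
    ext b c
    have h2 : (inner ℂ (e' k b) (e' k c) : ℂ) = ∑ a, (starRingEnd ℂ) (U k a b) * U k a c := by
      conv_lhs => rw [hexp k b]
      rw [sum_inner]
      exact Finset.sum_congr rfl fun a _ => by rw [inner_smul_left]; rfl
    rw [Matrix.mul_apply, Matrix.one_apply, ← horth' k b c, h2]
    exact Finset.sum_congr rfl fun a _ => by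
      rw [Matrix.conjTranspose_apply, Complex.star_def]
  have hU1 : ∀ k, U k * (U k)ᴴ = 1 := fun k => mul_eq_one_comm.mp (hunit k)
  -- entrywise derivative
  set U' : ℝ → Matrix (Fin n × Fin 2) (Fin n × Fin 2) ℂ :=
    fun k => Matrix.of fun a b => deriv (fun t => U t a b) k with hU'def
  have hU'd : ∀ k a b, HasDerivAt (fun t => U t a b) (U' k a b) k := fun k a b =>
    (((hUsm a b).differentiable (by simp)) k).hasDerivAt
  have hU'cont : ∀ a b, Continuous fun k => U' k a b := fun a b =>
    (hUsm a b).continuous_deriv (by simp)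
  have hed : ∀ a k, HasDerivAt (fun t => e t a) (deriv (fun t => e t a) k) k :=
    fun a k => ((hdiff a) k).hasDerivAt
  have he'd : ∀ k b, HasDerivAt (fun t => e' t b)
      (∑ a, (U' k a b • e k a + U k a b • deriv (fun t => e t a) k)) k := by
    intro k b
    have heq : (fun t => e' t b) = fun t => ∑ a, U t a b • e t a := funext fun t => hexp t b
    rw [heq]
    apply HasDerivAt.fun_sum
    intro a _
    have h := (hU'd k a b).smul (hed a k)
    exact h.congr_deriv (add_comm _ _)
  have he'deriv : ∀ k b, deriv (fun t => e' t b) k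
      = ∑ a, (U' k a b • e k a + U k a b • deriv (fun t => e t a) k) :=
    fun k b => (he'd k b).deriv
  -- the trace function
  set T : ℝ → ℂ := fun k => ∑ b, ∑ a, (starRingEnd ℂ) (U k a b) * U' k a b with hTdef
  have hTcont : Continuous T := by
    apply continuous_finset_sum _ fun b _ => continuous_finset_sum _ fun a _ => ?_
    exact (Complex.continuous_conj.comp (hUsm a b).continuous).mul (hU'cont a b)
  -- key identity
  have hAA : ∀ k, A' k - A k = -I * T k := by
    intro k
    have hsum1 : ∀ b, (inner ℂ (e' k b) (deriv (fun t => e' t b) k) : ℂ)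
        = (∑ a, (starRingEnd ℂ) (U k a b) * U' k a b)
          + ∑ a, ∑ c, (starRingEnd ℂ) (U k a b) * U k c b
              * (inner ℂ (e k a) (deriv (fun t => e t c) k) : ℂ) := by
      intro b
      conv_lhs => rw [hexp k b, he'deriv k b]
      rw [sum_inner]
      have hterm : ∀ a, (inner ℂ (U k a b • e k a)
          (∑ c, (U' k c b • e k c + U k c b • deriv (fun t => e t c) k)) : ℂ)
          = (starRingEnd ℂ) (U k a b) * U' k a b
            + ∑ c, (starRingEnd ℂ) (U k a b) * U k c b
                * (inner ℂ (e k a) (deriv (fun t => e t c) k) : ℂ) := by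
        intro a
        rw [inner_smul_left, inner_sum]
        have h3 : ∀ c, (inner ℂ (e k a) (U' k c b • e k c + U k c b • deriv (fun t => e t c) k) : ℂ)
            = U' k c b * (if a = c then 1 else 0)
              + U k c b * (inner ℂ (e k a) (deriv (fun t => e t c) k) : ℂ) := by
          intro c
          rw [inner_add_right, inner_smul_right, inner_smul_right, horth k a c]
        rw [Finset.sum_congr rfl fun c _ => h3 c, Finset.sum_add_distrib]
        have h4 : (∑ c, U' k c b * (if a = c then (1:ℂ) else 0)) = U' k a b := by
          simp [mul_ite]
        rw [h4, mul_add, Finset.mul_sum]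
        congr 1
        exact Finset.sum_congr rfl fun c _ => by ring
      rw [Finset.sum_congr rfl fun a _ => hterm a, Finset.sum_add_distrib]
    have hdelta : ∀ a c, (∑ b, (starRingEnd ℂ) (U k a b) * U k c b) = if c = a then (1:ℂ) else 0 := by
      intro a c
      have h := hU1 k
      rw [← Matrix.ext_iff] at h
      have h5 := h c a
      rw [Matrix.mul_apply, Matrix.one_apply] at h5
      rw [← h5]
      exact Finset.sum_congr rfl fun b _ => by
        rw [Matrix.conjTranspose_apply, Complex.star_def]; ring
    have hsum2 : (∑ b, (inner ℂ (e' k b) (deriv (fun t => e' t b) k) : ℂ))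
        = T k + ∑ a, (inner ℂ (e k a) (deriv (fun t => e t a) k) : ℂ) := by
      rw [Finset.sum_congr rfl fun b _ => hsum1 b, Finset.sum_add_distrib]
      congr 1
      calc (∑ b, ∑ a, ∑ c, (starRingEnd ℂ) (U k a b) * U k c b
              * (inner ℂ (e k a) (deriv (fun t => e t c) k) : ℂ))
          = ∑ a, ∑ c, (∑ b, (starRingEnd ℂ) (U k a b) * U k c b)
              * (inner ℂ (e k a) (deriv (fun t => e t c) k) : ℂ) := by
            rw [Finset.sum_comm]
            refine Finset.sum_congr rfl fun a _ => ?_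
            rw [Finset.sum_comm]
            refine Finset.sum_congr rfl fun c _ => ?_
            rw [Finset.sum_mul]
        _ = ∑ a, (inner ℂ (e k a) (deriv (fun t => e t a) k) : ℂ) := by
            refine Finset.sum_congr rfl fun a _ => ?_
            rw [Finset.sum_congr rfl fun c _ => by rw [hdelta a c]]
            simp [ite_mul]
    rw [hA, hA', hsum2]
    ring
  -- determinant of the overlap matrix
  set d : ℝ → ℂ := fun k => (U k).det with hddef
  have hdet_deriv : ∀ k, HasDerivAt d (d k * T k) k := by
    intro k
    have h1 : HasDerivAt d
        (∑ a, (Matrix.updateCol (U k) a (fun i => U' k i a)).det) k := by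
      have hd_eq : d = fun t => ∑ σ : Equiv.Perm (Fin n × Fin 2),
          ((Equiv.Perm.sign σ : ℤ) : ℂ) * ∏ i, U t (σ i) i :=
        funext fun t => Matrix.det_apply' (U t)
      rw [hd_eq]
      have hterm : ∀ σ : Equiv.Perm (Fin n × Fin 2),
          HasDerivAt (fun t => ((Equiv.Perm.sign σ : ℤ) : ℂ) * ∏ i, U t (σ i) i)
            (((Equiv.Perm.sign σ : ℤ) : ℂ)
              * ∑ i, (∏ j ∈ Finset.univ.erase i, U k (σ j) j) * U' k (σ i) i) k := by
        intro σ
        have hp := HasDerivAt.finset_prod (u := Finset.univ)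
          (f := fun i t => U t (σ i) i) (f' := fun i => U' k (σ i) i)
          (fun i _ => hU'd k (σ i) i)
        have hp2 := hp.const_mul ((( Equiv.Perm.sign σ : ℤ) : ℂ))
        simpa [smul_eq_mul] using hp2
      have hsum := HasDerivAt.fun_sum (u := Finset.univ) (fun σ _ => hterm σ)
      refine hsum.congr_deriv (Eq.symm ?_)
      -- rearrange: ∑ a det(updateColumn..) = ∑ σ ε σ * ∑ i ...
      have hup : ∀ a : Fin n × Fin 2, (Matrix.updateCol (U k) a fun i => U' k i a).det
          = ∑ σ : Equiv.Perm (Fin n × Fin 2), ((Equiv.Perm.sign σ : ℤ) : ℂ)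
              * ((∏ j ∈ Finset.univ.erase a, U k (σ j) j) * U' k (σ a) a) := by
        intro a
        rw [Matrix.det_apply']
        refine Finset.sum_congr rfl fun σ _ => ?_
        congr 1
        rw [← Finset.prod_erase_mul Finset.univ _ (Finset.mem_univ a)]
        congr 1
        · exact Finset.prod_congr rfl fun j hj => by
            rw [Matrix.updateCol_apply, if_neg (Finset.ne_of_mem_erase hj)]
        · rw [Matrix.updateCol_apply, if_pos rfl]
      calc (∑ a : Fin n × Fin 2, (Matrix.updateCol (U k) a fun i => U' k i a).det)
          = ∑ a : Fin n × Fin 2, ∑ σ : Equiv.Perm (Fin n × Fin 2),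
              ((Equiv.Perm.sign σ : ℤ) : ℂ)
                * ((∏ j ∈ Finset.univ.erase a, U k (σ j) j) * U' k (σ a) a) :=
            Finset.sum_congr rfl fun a _ => hup a
        _ = ∑ σ : Equiv.Perm (Fin n × Fin 2), ∑ a : Fin n × Fin 2,
              ((Equiv.Perm.sign σ : ℤ) : ℂ)
                * ((∏ j ∈ Finset.univ.erase a, U k (σ j) j) * U' k (σ a) a) :=
            Finset.sum_comm
        _ = ∑ σ : Equiv.Perm (Fin n × Fin 2), ((Equiv.Perm.sign σ : ℤ) : ℂ)
              * ∑ i, (∏ j ∈ Finset.univ.erase i, U k (σ j) j) * U' k (σ i) i :=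
            Finset.sum_congr rfl fun σ _ => by rw [← Finset.mul_sum]
    -- value equals d k * T k
    have hadjug : (U k).adjugate = d k • (U k)ᴴ := by
      have h3 := Matrix.mul_adjugate (U k)
      calc (U k).adjugate = 1 * (U k).adjugate := (one_mul _).symm
        _ = ((U k)ᴴ * U k) * (U k).adjugate := by rw [hunit k]
        _ = (U k)ᴴ * (U k * (U k).adjugate) := by rw [Matrix.mul_assoc]
        _ = (U k)ᴴ * ((U k).det • 1) := by rw [h3]
        _ = d k • (U k)ᴴ := by rw [Matrix.mul_smul, Matrix.mul_one]
    have h2 : (∑ a, (Matrix.updateCol (U k) a (fun i => U' k i a)).det) = d k * T k := by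
      calc (∑ a, (Matrix.updateCol (U k) a (fun i => U' k i a)).det)
          = ∑ a, (U k).cramer (fun i => U' k i a) a :=
            Finset.sum_congr rfl fun a _ => (Matrix.cramer_apply _ _ _).symm
        _ = ∑ a, ((U k).adjugate *ᵥ fun i => U' k i a) a :=
            Finset.sum_congr rfl fun a _ => by rw [Matrix.cramer_eq_adjugate_mulVec]
        _ = ∑ a, ∑ i, d k * ((starRingEnd ℂ) (U k i a) * U' k i a) := by
            refine Finset.sum_congr rfl fun a _ => ?_
            rw [Matrix.mulVec, dotProduct]
            refine Finset.sum_congr rfl fun i _ => ?_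
            rw [hadjug, Matrix.smul_apply, Matrix.conjTranspose_apply, Complex.star_def,
              smul_eq_mul]
            ring
        _ = d k * T k := by
            rw [hTdef, Finset.mul_sum]
            refine Finset.sum_congr rfl fun a _ => ?_
            rw [Finset.mul_sum]
    rw [← h2]
    exact h1
  -- |d| = 1
  have hdmod : ∀ k, (starRingEnd ℂ) (d k) * d k = 1 := by
    intro k
    have h := congrArg Matrix.det (hunit k)
    rwa [Matrix.det_mul, Matrix.det_conjTranspose, Matrix.det_one, Complex.star_def] at h
  -- T is purely imaginary
  have hTim : ∀ k, (starRingEnd ℂ) (T k) = -T k := by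
    intro k
    have hstar : HasDerivAt (fun t => (starRingEnd ℂ) (d t)) ((starRingEnd ℂ) (d k * T k)) k := by
      have h := (hdet_deriv k).star
      simp only [Complex.star_def] at h
      exact h
    have h1 := hstar.mul (hdet_deriv k)
    have h2 : (fun t => (starRingEnd ℂ) (d t) * d t) = fun _ => (1:ℂ) := funext fun t => hdmod t
    have h0 : HasDerivAt (fun t => (starRingEnd ℂ) (d t) * d t) 0 k := by
      rw [h2]; exact hasDerivAt_const k 1
    have h3 := h1.unique h0
    rw [_root_.map_mul] at h3
    linear_combination h3 - ((starRingEnd ℂ) (T k) + T k) * hdmod k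
  -- symmetry relations for U under k ↦ -k
  have hU00 : ∀ (k : ℝ) (l m : Fin n),
      U (-k) (l,0) (m,0) = (starRingEnd ℂ) (U k (l,1) (m,1)) := by
    intro k l m
    rw [hUapp, hUapp, (hTRS k l).1, (hTRS' k m).1, inner_neg_neg, hinner, ← inner_conj_symm]
  have hU01 : ∀ (k : ℝ) (l m : Fin n),
      U (-k) (l,0) (m,1) = -(starRingEnd ℂ) (U k (l,1) (m,0)) := by
    intro k l m
    rw [hUapp, hUapp, (hTRS k l).1, (hTRS' k m).2, inner_neg_left, hinner, ← inner_conj_symm]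
  have hU10 : ∀ (k : ℝ) (l m : Fin n),
      U (-k) (l,1) (m,0) = -(starRingEnd ℂ) (U k (l,0) (m,1)) := by
    intro k l m
    rw [hUapp, hUapp, (hTRS k l).2, (hTRS' k m).1, inner_neg_right, hinner, ← inner_conj_symm]
  have hU11 : ∀ (k : ℝ) (l m : Fin n),
      U (-k) (l,1) (m,1) = (starRingEnd ℂ) (U k (l,0) (m,0)) := by
    intro k l m
    rw [hUapp, hUapp, (hTRS k l).2, (hTRS' k m).2, hinner, ← inner_conj_symm]
  -- d(-k) = conj (d k)
  have hdneg : ∀ k, d (-k) = (starRingEnd ℂ) (d k) := by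
    intro k
    set cf : Fin n × Fin 2 → ℂ := fun a => if a.2 = 0 then 1 else -1 with hcf
    set sw : (Fin n × Fin 2) ≃ (Fin n × Fin 2) :=
      Equiv.prodCongr (Equiv.refl (Fin n)) (Equiv.swap (0 : Fin 2) 1) with hsw
    have hswap : ∀ (l : Fin n), sw (l, 0) = (l, 1) ∧ sw (l, 1) = (l, 0) := by
      intro l
      constructor <;> simp [hsw, Equiv.swap_apply_left, Equiv.swap_apply_right]
    have hmat : U (-k) = Matrix.diagonal cf
        * (((U k).map (starRingEnd ℂ)).submatrix sw sw) * Matrix.diagonal cf := by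
      ext a b
      rw [Matrix.mul_diagonal, Matrix.diagonal_mul, Matrix.submatrix_apply, Matrix.map_apply]
      obtain ⟨l, s⟩ := a
      obtain ⟨m, t⟩ := b
      fin_cases s <;> fin_cases t <;>
        simp only [Fin.zero_eta, Fin.mk_one, hU00 k l m, hU01 k l m, hU10 k l m, hU11 k l m,
          (hswap l).1, (hswap l).2, (hswap m).1, (hswap m).2] <;>
        norm_num [hcf]
    have hdiag2 : (Matrix.diagonal cf).det * (Matrix.diagonal cf).det = 1 := by
      rw [← Matrix.det_mul, Matrix.diagonal_mul_diagonal]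
      have : (fun a => cf a * cf a) = fun _ => (1:ℂ) := by
        funext a
        simp only [hcf]
        split_ifs <;> norm_num
      rw [this, Matrix.diagonal_one, Matrix.det_one]
    have hconjdet : (((U k).map (starRingEnd ℂ)).submatrix sw sw).det
        = (starRingEnd ℂ) (d k) := by
      rw [Matrix.det_submatrix_equiv_self]
      exact (RingHom.map_det (starRingEnd ℂ) (U k)).symm
    calc d (-k) = (U (-k)).det := rfl
      _ = (Matrix.diagonal cf).det * (((U k).map (starRingEnd ℂ)).submatrix sw sw).det
            * (Matrix.diagonal cf).det := by rw [hmat, Matrix.det_mul, Matrix.det_mul]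
      _ = ((Matrix.diagonal cf).det * (Matrix.diagonal cf).det)
            * (((U k).map (starRingEnd ℂ)).submatrix sw sw).det := by ring
      _ = (starRingEnd ℂ) (d k) := by rw [hdiag2, hconjdet, one_mul]
  -- T is even
  have hTneg : ∀ k, T (-k) = T k := by
    intro k
    have h1 : HasDerivAt (fun t => d (-t)) (-(d (-k) * T (-k))) k := by
      have h := (hdet_deriv (-k)).scomp k (hasDerivAt_neg k)
      simpa [Function.comp_def] using h
    have h2 : HasDerivAt (fun t => d (-t)) ((starRingEnd ℂ) (d k * T k)) k := by
      have h3 : (fun t : ℝ => d (-t)) = fun t => (starRingEnd ℂ) (d t) := funext fun t => hdneg t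
      rw [h3]
      have h := (hdet_deriv k).star
      simp only [Complex.star_def] at h
      exact h
    have h4 := h1.unique h2
    rw [_root_.map_mul, hTim k] at h4
    have h5 : (starRingEnd ℂ) (d k) * T (-k) = (starRingEnd ℂ) (d k) * T k := by
      have h6 : d (-k) * T (-k) = (starRingEnd ℂ) (d k) * T k := by linear_combination -h4
      rw [hdneg k] at h6
      exact h6
    calc T (-k) = ((starRingEnd ℂ) (d k) * d k) * T (-k) := by rw [hdmod k, one_mul]
      _ = d k * ((starRingEnd ℂ) (d k) * T (-k)) := by ring
      _ = d k * ((starRingEnd ℂ) (d k) * T k) := by rw [h5]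
      _ = ((starRingEnd ℂ) (d k) * d k) * T k := by ring
      _ = T k := by rw [hdmod k, one_mul]
  -- d = 1 at the symmetric points
  have hsymd : ∀ k : ℝ, ((∀ a, e (-k) a = e k a) ∧ (∀ a, e' (-k) a = e' k a)) → d k = 1 := by
    intro k hk
    have hUkk : ∀ a b, U (-k) a b = U k a b := by
      intro a b
      rw [hUapp, hUapp, hk.1, hk.2]
    apply quatMatrixDet (U k) (hunit k)
    · intro l m
      rw [← hUkk (l,0) (m,0), hU00 k l m]
    · intro l m
      rw [← hUkk (l,0) (m,1), hU01 k l m]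
  have hd0 : d 0 = 1 := by
    apply hsymd 0
    constructor <;> intro a <;> rw [neg_zero]
  have hdpi : d Real.pi = 1 := by
    apply hsymd Real.pi
    constructor <;> intro a
    · have h := hper (-Real.pi) a
      have h2 : -Real.pi + 2 * Real.pi = Real.pi := by ring
      rw [h2] at h
      exact h.symm
    · have h := hper' (-Real.pi) a
      have h2 : -Real.pi + 2 * Real.pi = Real.pi := by ring
      rw [h2] at h
      exact h.symm
  -- continuity of the connections
  have hAcont : Continuous A := by
    have hAeq : A = fun k => -I * ∑ a, (inner ℂ (e k a) (deriv (fun t => e t a) k) : ℂ) :=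
      funext hA
    rw [hAeq]
    refine continuous_const.mul (continuous_finset_sum _ fun a _ => ?_)
    exact Continuous.inner (hsmooth a).continuous ((hsmooth a).continuous_deriv (by simp))
  have hA'cont : Continuous A' := by
    have hAeq : A' = fun k => -I * ∑ a, (inner ℂ (e' k a) (deriv (fun t => e' t a) k) : ℂ) :=
      funext hA'
    rw [hAeq]
    refine continuous_const.mul (continuous_finset_sum _ fun a _ => ?_)
    exact Continuous.inner (hsmooth' a).continuous ((hsmooth' a).continuous_deriv (by simp))
  have hTint : ∀ a b : ℝ, IntervalIntegrable T MeasureTheory.volume a b :=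
    fun a b => hTcont.intervalIntegrable a b
  set ψ : ℝ → ℂ := fun x => ∫ t in (0:ℝ)..x, T t with hψdef
  have hψd : ∀ x, HasDerivAt ψ (T x) x := fun x =>
    intervalIntegral.integral_hasDerivAt_right (hTint 0 x)
      (hTcont.stronglyMeasurableAtFilter _ _) hTcont.continuousAt
  have hFd : ∀ x, HasDerivAt (fun y => d y * Complex.exp (-ψ y)) 0 x := by
    intro x
    have h1 : HasDerivAt (fun y => Complex.exp (-ψ y)) (Complex.exp (-ψ x) * (-T x)) x := by
      have h2 := ((hψd x).neg).cexp
      simpa using h2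
    have h3 := (hdet_deriv x).mul h1
    exact h3.congr_deriv (by ring)
  have hFconst : d Real.pi * Complex.exp (-ψ Real.pi) = d 0 * Complex.exp (-ψ 0) :=
    is_const_of_deriv_eq_zero (fun t => (hFd t).differentiableAt)
      (fun t => (hFd t).deriv) _ _
  have hψ0 : ψ 0 = 0 := intervalIntegral.integral_same
  have hexp1 : Complex.exp (ψ Real.pi) = 1 := by
    rw [hd0, hdpi, hψ0, one_mul, one_mul, neg_zero, Complex.exp_zero] at hFconst
    have h2 : Complex.exp (ψ Real.pi) * Complex.exp (-ψ Real.pi) = 1 := by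
      rw [← Complex.exp_add]
      simp
    rw [hFconst, mul_one] at h2
    exact h2
  obtain ⟨m0, hm0⟩ := Complex.exp_eq_one_iff.mp hexp1
  refine ⟨m0, ?_⟩
  have hint' : IntervalIntegrable A' MeasureTheory.volume (-Real.pi) Real.pi :=
    hA'cont.intervalIntegrable _ _
  have hint : IntervalIntegrable A MeasureTheory.volume (-Real.pi) Real.pi :=
    hAcont.intervalIntegrable _ _
  have hsub : (∫ k in (-Real.pi)..Real.pi, A' k) - (∫ k in (-Real.pi)..Real.pi, A k)
      = ∫ k in (-Real.pi)..Real.pi, (A' k - A k) :=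
    (intervalIntegral.integral_sub hint' hint).symm
  have hTeq : (∫ k in (-Real.pi)..Real.pi, (A' k - A k))
      = -I * ∫ k in (-Real.pi)..Real.pi, T k := by
    rw [← intervalIntegral.integral_const_mul]
    exact intervalIntegral.integral_congr fun k _ => hAA k
  have hhalf : (∫ k in (-Real.pi)..(0:ℝ), T k) = ∫ k in (0:ℝ)..Real.pi, T k := by
    calc (∫ k in (-Real.pi)..(0:ℝ), T k) = ∫ k in (0:ℝ)..Real.pi, T (-k) := by
          have h2 := intervalIntegral.integral_comp_neg (a := 0) (b := Real.pi) T
          rw [neg_zero] at h2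
          rw [h2]
      _ = ∫ k in (0:ℝ)..Real.pi, T k :=
          intervalIntegral.integral_congr fun k _ => hTneg k
  have htotal : (∫ k in (-Real.pi)..Real.pi, T k) = 2 * ψ Real.pi := by
    have h2 := intervalIntegral.integral_add_adjacent_intervals
      (hTint (-Real.pi) 0) (hTint 0 Real.pi)
    rw [← h2, hhalf, hψdef]
    ring
  rw [hsub, hTeq, htotal, hm0]
  linear_combination (-4*(Real.pi:ℂ)*(m0:ℂ)) * Complex.I_sq
end
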